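/- arXiv:1502.03500 — 8 statements merged into one kernel-verified Lean document; each statement's English description precedes it below -/
import Mathlib

section
/- Let A be a real n×n matrix, B a real n×m matrix, α > 0, and suppose P is a real symmetric positive definite n×n matrix such that P·A + Aᵀ·P − 2·P·B·Bᵀ·P + 2α·P is negative definite. Set F = −Bᵀ·P. Let c > 0 and let s ∈ ℂ satisfy c·Re(s) ≥ 1. Then every eigenvalue μ of the complex n×n matrix A + c·s·B·F (real matrices viewed as complex) satisfies Re(μ) < 0; that is, A + c·s·B·F is Hurwitz. -/
/-! If `M v = μ v` with `v ≠ 0`, then `v⋆ (Mᴴ P + P M) v = 2 Re μ · v⋆ P v`; hence a Lyapunov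
matrix `P > 0` with `Mᴴ P + P M < 0` forces `Re μ < 0`. Since `B F = -B Bᵀ P`, the closed loop is
`M = A - c s B Bᵀ P`, whose Lyapunov expression with the complexified `P` is the real matrix
`P A + Aᵀ P - 2 c Re(s) P B Bᵀ P`. This is the negative definite Riccati matrix, minus `2α P`,
plus `(2 - 2 c Re s) P B Bᵀ P`, which is negative semidefinite because `c Re s ≥ 1`. -/

open Matrix
open scoped ComplexOrder

namespace Matrix

variable {n m : Type*} [Fintype n] [Fintype m]

lemma re_star_dotProduct_map_ofReal_mulVec (M : Matrix n n ℝ) (v : n → ℂ) :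
    (star v ⬝ᵥ M.map Complex.ofReal *ᵥ v).re =
      (fun i ↦ (v i).re) ⬝ᵥ M *ᵥ (fun i ↦ (v i).re)
        + (fun i ↦ (v i).im) ⬝ᵥ M *ᵥ (fun i ↦ (v i).im) := by
  simp only [dotProduct, mulVec, Complex.re_sum, Finset.mul_sum, ← Finset.sum_add_distrib]
  refine Finset.sum_congr rfl fun j _ ↦ Finset.sum_congr rfl fun k _ ↦ ?_
  simp only [Pi.star_apply, map_apply, Complex.star_def, Complex.mul_re, Complex.mul_im,
    Complex.conj_re, Complex.conj_im, Complex.ofReal_re, Complex.ofReal_im]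
  ring

lemma PosDef.map_ofReal {M : Matrix n n ℝ} (hM : M.PosDef) : (M.map Complex.ofReal).PosDef := by
  have hHerm : (M.map Complex.ofReal).IsHermitian :=
    hM.isHermitian.map _ fun x ↦ by simp
  have hnonneg (x : n → ℝ) : 0 ≤ x ⬝ᵥ M *ᵥ x := by
    simpa using hM.posSemidef.dotProduct_mulVec_nonneg x
  have hpos {x : n → ℝ} (hx : x ≠ 0) : 0 < x ⬝ᵥ M *ᵥ x := by
    simpa using hM.dotProduct_mulVec_pos hx
  refine .of_dotProduct_mulVec_pos hHerm fun v hv ↦ Complex.pos_iff.mpr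
    ⟨?_, (hHerm.im_star_dotProduct_mulVec_self v).symm⟩
  rw [re_star_dotProduct_map_ofReal_mulVec]
  by_cases hre : (fun i ↦ (v i).re) = 0
  · have him : (fun i ↦ (v i).im) ≠ 0 := fun him ↦
      hv (funext fun i ↦ Complex.ext (congrFun hre i) (congrFun him i))
    exact add_pos_of_nonneg_of_pos (hnonneg _) (hpos him)
  · exact add_pos_of_pos_of_nonneg (hpos hre) (hnonneg _)

lemma conjTranspose_mul_add_mul_eq_riccati (A P : Matrix n n ℝ) (hP : Pᵀ = P)
    (B : Matrix n m ℝ) (z : ℂ) :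
    (A.map Complex.ofReal - z • (B * Bᵀ * P).map Complex.ofReal)ᴴ * P.map Complex.ofReal
        + P.map Complex.ofReal * (A.map Complex.ofReal - z • (B * Bᵀ * P).map Complex.ofReal)
      = (P * A + Aᵀ * P - (2 * z.re) • (P * B * Bᵀ * P)).map Complex.ofReal := by
  have hct (X : Matrix n n ℝ) : (X.map Complex.ofReal)ᴴ = Xᵀ.map Complex.ofReal := by
    ext; simp
  have hmul (X Y : Matrix n n ℝ) :
      (X * Y).map Complex.ofReal = X.map Complex.ofReal * Y.map Complex.ofReal :=
    Matrix.map_mul (f := Complex.ofRealHom)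
  have hleft : (B * Bᵀ * P)ᵀ * P = P * B * Bᵀ * P := by
    simp only [transpose_mul, transpose_transpose, hP, Matrix.mul_assoc]
  have hright : P * (B * Bᵀ * P) = P * B * Bᵀ * P := by
    simp only [Matrix.mul_assoc]
  have hmap : (P * A + Aᵀ * P - (2 * z.re) • (P * B * Bᵀ * P)).map Complex.ofReal
      = (P * A).map Complex.ofReal + (Aᵀ * P).map Complex.ofReal
        - ((2 * z.re : ℝ) : ℂ) • (P * B * Bᵀ * P).map Complex.ofReal := by
    ext; simp
  rw [conjTranspose_sub, conjTranspose_smul, hct, hct, Matrix.sub_mul, Matrix.mul_sub,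
    Matrix.smul_mul, Matrix.mul_smul, ← hmul, ← hmul, ← hmul, ← hmul, hleft, hright, hmap,
    ← Complex.add_conj, Complex.star_def]
  module

variable [DecidableEq n]

lemma exists_mulVec_eq_smul_of_mem_spectrum {M : Matrix n n ℂ} {μ : ℂ}
    (hμ : μ ∈ spectrum ℂ M) : ∃ v, v ≠ 0 ∧ M *ᵥ v = μ • v := by
  rw [← spectrum_toLin', ← Module.End.hasEigenvalue_iff_mem_spectrum] at hμ
  obtain ⟨v, hv⟩ := hμ.exists_hasEigenvector
  exact ⟨v, hv.2, by simpa using hv.apply_eq_smul⟩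

theorem re_lt_zero_of_mem_spectrum_of_lyapunov {M P : Matrix n n ℂ} (hP : P.PosDef)
    (hL : (-(Mᴴ * P + P * M)).PosDef) {μ : ℂ} (hμ : μ ∈ spectrum ℂ M) : μ.re < 0 := by
  obtain ⟨v, hv0, hv⟩ := exists_mulVec_eq_smul_of_mem_spectrum hμ
  have hquad : star v ⬝ᵥ (Mᴴ * P + P * M) *ᵥ v = (2 * μ.re : ℝ) * (star v ⬝ᵥ P *ᵥ v) := by
    rw [add_mulVec, dotProduct_add, ← mulVec_mulVec, ← mulVec_mulVec, dotProduct_mulVec,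
      ← star_mulVec, hv, mulVec_smul, star_smul, smul_dotProduct, dotProduct_smul,
      ← Complex.add_conj, smul_eq_mul, smul_eq_mul, Complex.star_def]
    ring
  have hp := hP.dotProduct_mulVec_pos hv0
  have hq := hL.dotProduct_mulVec_pos hv0
  rw [neg_mulVec, dotProduct_neg, hquad, neg_pos] at hq
  by_contra! hμre
  exact (mul_nonneg (by exact_mod_cast mul_nonneg zero_le_two hμre) hp.le).not_gt hq

end Matrix

theorem stmt5_general (n m : ℕ)
    (A : Matrix (Fin n) (Fin n) ℝ) (B : Matrix (Fin n) (Fin m) ℝ)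
    (α : ℝ) (hα : 0 < α)
    (P : Matrix (Fin n) (Fin n) ℝ) (hP : P.PosDef)
    (hRic : (-(P * A + Aᵀ * P - (2 : ℝ) • (P * B * Bᵀ * P) + (2 * α) • P)).PosDef)
    (F : Matrix (Fin m) (Fin n) ℝ) (hF : F = -(Bᵀ * P))
    (c : ℝ) (s : ℂ) (hs : 1 ≤ c * s.re) :
    ∀ μ ∈ spectrum ℂ
        (A.map (Complex.ofReal) + ((c : ℂ) * s) • ((B * F).map Complex.ofReal)),
      μ.re < 0 := by
  intro μ hμ
  have hPsym : Pᵀ = P := by simpa [conjTranspose_eq_transpose_of_trivial] using hP.isHermitian.eq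
  have hclosed : A.map Complex.ofReal + ((c : ℂ) * s) • (B * F).map Complex.ofReal
      = A.map Complex.ofReal - ((c : ℂ) * s) • (B * Bᵀ * P).map Complex.ofReal := by
    rw [hF, Matrix.mul_neg, ← Matrix.mul_assoc, Matrix.map_neg _ Complex.ofReal_neg, smul_neg,
      sub_eq_add_neg]
  have hgain : (P * B * Bᵀ * P).PosSemidef := by
    simpa [conjTranspose_eq_transpose_of_trivial, Matrix.mul_assoc, hPsym]
      using posSemidef_conjTranspose_mul_self (Bᵀ * P)
  have hLyap : (-(P * A + Aᵀ * P - (2 * ((c : ℂ) * s).re) • (P * B * Bᵀ * P))).PosDef := by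
    have hsum := (hRic.add (hP.smul (by positivity : 0 < 2 * α))).add_posSemidef
      (hgain.smul (by linarith : 0 ≤ 2 * (c * s.re) - 2))
    convert hsum using 1
    simp only [Complex.re_ofReal_mul]
    module
  rw [hclosed] at hμ
  refine re_lt_zero_of_mem_spectrum_of_lyapunov hP.map_ofReal ?_ hμ
  rw [conjTranspose_mul_add_mul_eq_riccati A P hPsym, ← Matrix.map_neg _ Complex.ofReal_neg]
  exact hLyap.map_ofReal

/-- If `P` is symmetric positive definite with
`P·A + Aᵀ·P − 2·P·B·Bᵀ·P + 2α·P` negative definite (`α > 0`), `F = −Bᵀ·P`, `c > 0` and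
`s ∈ ℂ` satisfies `c·Re(s) ≥ 1`, then `A + c·s·B·F` (over `ℂ`) is Hurwitz: every eigenvalue
has strictly negative real part. -/
theorem stmt5 (n m : ℕ) (hn : 0 < n) (hm : 0 < m)
    (A : Matrix (Fin n) (Fin n) ℝ) (B : Matrix (Fin n) (Fin m) ℝ)
    (α : ℝ) (hα : 0 < α)
    (P : Matrix (Fin n) (Fin n) ℝ) (hP : P.PosDef)
    (hRic : (-(P * A + Aᵀ * P - (2 : ℝ) • (P * B * Bᵀ * P) + (2 * α) • P)).PosDef)
    (F : Matrix (Fin m) (Fin n) ℝ) (hF : F = -(Bᵀ * P))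
    (c : ℝ) (hc : 0 < c) (s : ℂ) (hs : 1 ≤ c * s.re) :
    ∀ μ ∈ spectrum ℂ
        (A.map (Complex.ofReal) + ((c : ℂ) * s) • ((B * F).map Complex.ofReal)),
      μ.re < 0 :=
  stmt5_general n m A B α hα P hP hRic F hF c s hs
end

section
/- Let a ≥ 0, c′ ≥ 0, K₁ ≥ 0, K₂ ≥ 0, λ̂ > λ > 0, and t_k ≥ 0. Let e : ℝ → ℝⁿ be differentiable on [t_k, T] with e(t_k) = 0 and ‖e′(t)‖ ≤ a·‖e(t)‖ + c′·(K₁·exp(−λ̂·t) + K₂·exp(−λ·t)) for all t ∈ [t_k, T]. Then for all t ∈ [t_k, T], writing τ = t − t_k, ‖e(t)‖ ≤ (exp(a·τ) − exp(−λ̂·τ))·(K₁·c′/(a+λ̂))·exp(−λ̂·t_k) + (exp(a·τ) − exp(−λ·τ))·(K₂·c′/(a+λ))·exp(−λ·t_k). -/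
/-!
The right-hand side `B` solves the comparison equation `B' = a B + c′(K₁ e^{-λ̂ t} + K₂ e^{-λ t})`
with `B(t_k) = 0 = ‖e(t_k)‖`; it is `K₁c′ φ_{λ̂} + K₂c′ φ_λ`, where
`φ_μ(t) = (e^{a(t - t₀)} - e^{-μ(t - t₀)}) e^{-μ t₀} / (a + μ) = ∫_{t₀}^t e^{a(t-s)} e^{-μ s} ds`.
Each `B + r e^{(a+1)(t - t_k)}` with `r > 0` is a strict supersolution, so the strict fencing
theorem keeps `‖e‖` below it; letting `r → 0` gives the bound.
-/

open Set Real

section Comparison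

variable {E : Type*} [NormedAddCommGroup E] [NormedSpace ℝ E] {f f' : ℝ → E} {B B' g : ℝ → ℝ} {K a b : ℝ}

theorem norm_le_of_norm_deriv_right_le_linear_boundary
    (hf : ContinuousOn f (Icc a b)) (hf' : ∀ x ∈ Ico a b, HasDerivWithinAt f (f' x) (Ici x) x)
    (bound : ∀ x ∈ Ico a b, ‖f' x‖ ≤ K * ‖f x‖ + g x)
    (hB : ContinuousOn B (Icc a b)) (hB' : ∀ x ∈ Ico a b, HasDerivWithinAt B (B' x) (Ici x) x)
    (hsuper : ∀ x ∈ Ico a b, K * B x + g x ≤ B' x) (ha : ‖f a‖ ≤ B a) :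
    ∀ ⦃x⦄, x ∈ Icc a b → ‖f x‖ ≤ B x := by
  have fence : ∀ r > (0 : ℝ), ∀ ⦃x⦄, x ∈ Icc a b → ‖f x‖ ≤ B x + r * exp ((K + 1) * (x - a)) := by
    intro r hr
    have hexp : ∀ x, HasDerivAt (fun y => r * exp ((K + 1) * (y - a)))
        (r * ((K + 1) * exp ((K + 1) * (x - a)))) x := fun x => by
      simpa [mul_comm] using ((((hasDerivAt_id x).sub_const a).const_mul (K + 1)).exp).const_mul r
    refine image_norm_le_of_norm_deriv_right_lt_deriv_boundary' hf hf' (by simpa using add_le_add ha hr.le)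
      (hB.add (Continuous.continuousOn (by fun_prop)))
      (fun x hx => (hB' x hx).add (hexp x).hasDerivWithinAt) fun x hx hfx => ?_
    have hpos : 0 < r * exp ((K + 1) * (x - a)) := by positivity
    calc ‖f' x‖ ≤ K * ‖f x‖ + g x := bound x hx
      _ = K * B x + g x + K * (r * exp ((K + 1) * (x - a))) := by rw [hfx]; ring
      _ < B' x + r * ((K + 1) * exp ((K + 1) * (x - a))) := by linarith [hsuper x hx]
  intro x hx
  refine le_of_forall_pos_le_add fun ε hε => ?_
  have hr : 0 < ε * exp (-((K + 1) * (x - a))) := by positivity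
  simpa [mul_assoc, ← exp_add] using fence _ hr hx

end Comparison

/-- `∫_{t₀}^t e^{a(t-s)} e^{-μ s} ds`, in closed form. -/
noncomputable def expConvolution (a μ t₀ t : ℝ) : ℝ :=
  (exp (a * (t - t₀)) - exp (-(μ * (t - t₀)))) / (a + μ) * exp (-(μ * t₀))

@[simp]
theorem expConvolution_self (a μ t₀ : ℝ) : expConvolution a μ t₀ t₀ = 0 := by
  simp [expConvolution]

theorem hasDerivAt_expConvolution {a μ : ℝ} (h : a + μ ≠ 0) (t₀ t : ℝ) :
    HasDerivAt (expConvolution a μ t₀) (a * expConvolution a μ t₀ t + exp (-(μ * t))) t := by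
  have hlin : ∀ k : ℝ, HasDerivAt (fun s => exp (k * (s - t₀))) (exp (k * (t - t₀)) * k) t :=
    fun k => by simpa using (((hasDerivAt_id t).sub_const t₀).const_mul k).exp
  have hsplit : exp (-(μ * t)) = exp (-(μ * (t - t₀))) * exp (-(μ * t₀)) := by
    rw [← exp_add]; ring_nf
  refine (((hlin a).sub (by simpa using hlin (-μ))).div_const (a + μ)).mul_const
    (exp (-(μ * t₀))) |>.congr_deriv ?_
  rw [expConvolution, hsplit]
  field_simp
  ring

theorem stmt6_general (n : ℕ) (a c' K₁ K₂ lamhat lam tk T : ℝ)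
    (ha : 0 ≤ a)
    (hlam : 0 < lam) (hlamlt : lam < lamhat)
    (e e' : ℝ → EuclideanSpace ℝ (Fin n))
    (hderiv : ∀ t ∈ Set.Icc tk T, HasDerivWithinAt e (e' t) (Set.Icc tk T) t)
    (h0 : e tk = 0)
    (hbnd : ∀ t ∈ Set.Icc tk T,
      ‖e' t‖ ≤ a * ‖e t‖ + c' * (K₁ * Real.exp (-(lamhat * t)) + K₂ * Real.exp (-(lam * t)))) :
    ∀ t ∈ Set.Icc tk T,
      ‖e t‖ ≤
        (Real.exp (a * (t - tk)) - Real.exp (-(lamhat * (t - tk)))) *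
          (K₁ * c' / (a + lamhat)) * Real.exp (-(lamhat * tk)) +
        (Real.exp (a * (t - tk)) - Real.exp (-(lam * (t - tk)))) *
          (K₂ * c' / (a + lam)) * Real.exp (-(lam * tk)) := by
  set B := fun t => K₁ * c' * expConvolution a lamhat tk t + K₂ * c' * expConvolution a lam tk t
  have hB : ∀ t, HasDerivAt B (a * B t +
      c' * (K₁ * exp (-(lamhat * t)) + K₂ * exp (-(lam * t)))) t := fun t => by
    have h₁ := hasDerivAt_expConvolution (a := a) (μ := lamhat) (by linarith) tk t
    have h₂ := hasDerivAt_expConvolution (a := a) (μ := lam) (by linarith) tk t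
    exact ((h₁.const_mul (K₁ * c')).add (h₂.const_mul (K₂ * c'))).congr_deriv (by ring)
  intro t ht
  convert norm_le_of_norm_deriv_right_le_linear_boundary
    (fun x hx => (hderiv x hx).continuousWithinAt)
    (fun x hx => (hderiv x (Ico_subset_Icc_self hx)).mono_of_mem_nhdsWithin
      (Icc_mem_nhdsGE_of_mem hx))
    (fun x hx => hbnd x (Ico_subset_Icc_self hx))
    (fun x _ => (hB x).continuousAt.continuousWithinAt) (fun x _ => (hB x).hasDerivWithinAt)
    (fun x _ => le_rfl) (by simp [B, h0]) ht using 1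
  simp only [B, expConvolution]
  ring

/-- Grönwall-type bound for the event-triggering error: if `e(t_k) = 0` and
`‖e′(t)‖ ≤ a‖e(t)‖ + c′(K₁ e^{-λ̂ t} + K₂ e^{-λ t})` on `[t_k, T]`, then on `[t_k, T]`,
with `τ = t - t_k`,
`‖e(t)‖ ≤ (e^{aτ} - e^{-λ̂τ})(K₁c′/(a+λ̂))e^{-λ̂ t_k} + (e^{aτ} - e^{-λτ})(K₂c′/(a+λ))e^{-λ t_k}`. -/
theorem stmt6 (n : ℕ) (hn : 0 < n) (a c' K₁ K₂ lamhat lam tk T : ℝ)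
    (ha : 0 ≤ a) (hc' : 0 ≤ c') (hK₁ : 0 ≤ K₁) (hK₂ : 0 ≤ K₂)
    (hlam : 0 < lam) (hlamlt : lam < lamhat) (htk : 0 ≤ tk)
    (e e' : ℝ → EuclideanSpace ℝ (Fin n))
    (hderiv : ∀ t ∈ Set.Icc tk T, HasDerivWithinAt e (e' t) (Set.Icc tk T) t)
    (h0 : e tk = 0)
    (hbnd : ∀ t ∈ Set.Icc tk T,
      ‖e' t‖ ≤ a * ‖e t‖ + c' * (K₁ * Real.exp (-(lamhat * t)) + K₂ * Real.exp (-(lam * t)))) :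
    ∀ t ∈ Set.Icc tk T,
      ‖e t‖ ≤
        (Real.exp (a * (t - tk)) - Real.exp (-(lamhat * (t - tk)))) *
          (K₁ * c' / (a + lamhat)) * Real.exp (-(lamhat * tk)) +
        (Real.exp (a * (t - tk)) - Real.exp (-(lam * (t - tk)))) *
          (K₂ * c' / (a + lam)) * Real.exp (-(lam * tk)) :=
  stmt6_general n a c' K₁ K₂ lamhat lam tk T ha hlam hlamlt e e' hderiv h0 hbnd
end

section
/- Let a ≥ 0, c′ ≥ 0, K₁ ≥ 0, K₂ ≥ 0, λ̂ > λ > 0, β > 0, and t_k ≥ 0, and define K₃ = c′·(K₁·exp((λ−λ̂)·t_k)/(a+λ̂) + K₂/(a+λ)); assume K₃ > 0. Then the number τ = ln(1 + β/K₃)/(a + λ̂) is strictly positive and satisfies the equality (exp(a·τ) − exp(−λ̂·τ))·(K₁·c′/(a+λ̂))·exp((λ−λ̂)·t_k) + (exp(a·τ) − exp(−λ̂·τ))·(K₂·c′/(a+λ)) = β·exp(−λ̂·τ). Moreover, K₃ ≤ c′·(K₁/(a+λ̂) + K₂/(a+λ)) uniformly over all t_k ≥ 0. -/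
/-- With `K₃ = c′(K₁ e^{(λ-λ̂)t_k}/(a+λ̂) + K₂/(a+λ)) > 0`, the number
`τ = ln(1 + β/K₃)/(a+λ̂)` is strictly positive, satisfies the stated equality (with the
decay rate `λ̂` in both exponential factors of the left-hand side), and `K₃` is uniformly
bounded by `c′(K₁/(a+λ̂) + K₂/(a+λ))` over all `t_k ≥ 0`. -/
theorem stmt7 (a c' K₁ K₂ lamhat lam β tk : ℝ)
    (ha : 0 ≤ a) (hc' : 0 ≤ c') (hK₁ : 0 ≤ K₁) (hK₂ : 0 ≤ K₂)
    (hlam : 0 < lam) (hlamlt : lam < lamhat) (hβ : 0 < β) (htk : 0 ≤ tk)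
    (K₃ : ℝ)
    (hK₃def : K₃ = c' * (K₁ * Real.exp ((lam - lamhat) * tk) / (a + lamhat) + K₂ / (a + lam)))
    (hK₃pos : 0 < K₃)
    (τ : ℝ) (hτdef : τ = Real.log (1 + β / K₃) / (a + lamhat)) :
    0 < τ ∧
    (Real.exp (a * τ) - Real.exp (-(lamhat * τ))) * (K₁ * c' / (a + lamhat)) *
        Real.exp ((lam - lamhat) * tk) +
      (Real.exp (a * τ) - Real.exp (-(lamhat * τ))) * (K₂ * c' / (a + lam)) =
        β * Real.exp (-(lamhat * τ)) ∧
    K₃ ≤ c' * (K₁ / (a + lamhat) + K₂ / (a + lam)) := by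
  have hlamhat : 0 < lamhat := lt_trans hlam hlamlt
  have hsum : 0 < a + lamhat := by linarith
  have hrat : 0 < β / K₃ := div_pos hβ hK₃pos
  have hlog : 0 < Real.log (1 + β / K₃) := Real.log_pos (by linarith)
  have hτpos : 0 < τ := by rw [hτdef]; exact div_pos hlog hsum
  have hexp : Real.exp ((a + lamhat) * τ) = 1 + β / K₃ := by
    rw [hτdef, mul_div_cancel₀ _ (ne_of_gt hsum), Real.exp_log (by linarith)]
  refine ⟨hτpos, ?_, ?_⟩
  · -- equality
    have key : (Real.exp (a * τ) - Real.exp (-(lamhat * τ))) * K₃ =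
        β * Real.exp (-(lamhat * τ)) := by
      have h1 : Real.exp (a * τ) = (1 + β / K₃) * Real.exp (-(lamhat * τ)) := by
        rw [← hexp, ← Real.exp_add]; ring_nf
      rw [h1]
      have hepos : (0:ℝ) < Real.exp (-(lamhat * τ)) := Real.exp_pos _
      field_simp
      ring
    calc (Real.exp (a * τ) - Real.exp (-(lamhat * τ))) * (K₁ * c' / (a + lamhat)) *
        Real.exp ((lam - lamhat) * tk) +
      (Real.exp (a * τ) - Real.exp (-(lamhat * τ))) * (K₂ * c' / (a + lam))
        = (Real.exp (a * τ) - Real.exp (-(lamhat * τ))) * K₃ := by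
          rw [hK₃def]; ring
      _ = β * Real.exp (-(lamhat * τ)) := key
  · rw [hK₃def]
    have h1 : Real.exp ((lam - lamhat) * tk) ≤ 1 := by
      rw [← Real.exp_zero]
      apply Real.exp_le_exp.mpr
      nlinarith
    gcongr c' * (?_ / (a + lamhat) + K₂ / (a + lam))
    nlinarith
end

section
/- Let a ≥ 0, c′ ≥ 0, K₁ ≥ 0, K₂ ≥ 0, λ̂ > λ > 0, β > 0, and t_k ≥ 0, define K₃ = c′·(K₁·exp((λ−λ̂)·t_k)/(a+λ̂) + K₂/(a+λ)), assume K₃ > 0, and set τ = ln(1 + β/K₃)/(a + λ̂). Then (exp(a·τ) − exp(−λ̂·τ))·(K₁·c′/(a+λ̂))·exp((λ−λ̂)·t_k) + (exp(a·τ) − exp(−λ·τ))·(K₂·c′/(a+λ)) ≤ β·exp(−λ·τ). -/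
/-- With `K₃ = c′(K₁ e^{(λ-λ̂)t_k}/(a+λ̂) + K₂/(a+λ)) > 0` and
`τ = ln(1 + β/K₃)/(a+λ̂)`, the left-hand side of the inter-event bound (now with the
threshold decay rate `λ` in its second term) is at most `β e^{-λ τ}`. -/
theorem stmt8 (a c' K₁ K₂ lamhat lam β tk : ℝ)
    (ha : 0 ≤ a) (hc' : 0 ≤ c') (hK₁ : 0 ≤ K₁) (hK₂ : 0 ≤ K₂)
    (hlam : 0 < lam) (hlamlt : lam < lamhat) (hβ : 0 < β) (htk : 0 ≤ tk)
    (K₃ : ℝ)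
    (hK₃def : K₃ = c' * (K₁ * Real.exp ((lam - lamhat) * tk) / (a + lamhat) + K₂ / (a + lam)))
    (hK₃pos : 0 < K₃)
    (τ : ℝ) (hτdef : τ = Real.log (1 + β / K₃) / (a + lamhat)) :
    (Real.exp (a * τ) - Real.exp (-(lamhat * τ))) * (K₁ * c' / (a + lamhat)) *
        Real.exp ((lam - lamhat) * tk) +
      (Real.exp (a * τ) - Real.exp (-(lam * τ))) * (K₂ * c' / (a + lam)) ≤
        β * Real.exp (-(lam * τ)) := by
  have hdh : 0 < a + lamhat := by linarith
  have hdl : 0 < a + lam := by linarith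
  have hx : (0:ℝ) < 1 + β / K₃ := by positivity
  have hτ0 : 0 ≤ τ := by
    rw [hτdef]
    apply div_nonneg _ hdh.le
    apply Real.log_nonneg
    have : 0 < β / K₃ := by positivity
    linarith
  have hE : Real.exp ((a + lamhat) * τ) = 1 + β / K₃ := by
    rw [hτdef, mul_div_assoc', mul_comm, mul_div_assoc, div_self hdh.ne', mul_one,
      Real.exp_log hx]
  set A := K₁ * c' / (a + lamhat) * Real.exp ((lam - lamhat) * tk) with hA
  set B := K₂ * c' / (a + lam) with hB
  have hA0 : 0 ≤ A := by positivity
  have hB0 : 0 ≤ B := by positivity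
  have hK3AB : K₃ = A + B := by rw [hK₃def, hA, hB]; ring
  have hmono : Real.exp (-(lamhat * τ)) ≤ Real.exp (-(lam * τ)) := by
    apply Real.exp_le_exp.2; nlinarith
  have key1 : Real.exp (a * τ) - Real.exp (-(lamhat * τ)) =
      Real.exp (-(lamhat * τ)) * (β / K₃) := by
    have h1 : Real.exp (a * τ) = Real.exp (-(lamhat * τ)) * Real.exp ((a + lamhat) * τ) := by
      rw [← Real.exp_add]; ring_nf
    rw [h1, hE]; ring
  have key1' : Real.exp (a * τ) - Real.exp (-(lamhat * τ)) ≤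
      Real.exp (-(lam * τ)) * (β / K₃) := by
    rw [key1]
    apply mul_le_mul_of_nonneg_right hmono (by positivity)
  have key2 : Real.exp (a * τ) - Real.exp (-(lam * τ)) ≤
      Real.exp (-(lam * τ)) * (β / K₃) := by
    have h1 : Real.exp (a * τ) = Real.exp (-(lam * τ)) * Real.exp ((a + lam) * τ) := by
      rw [← Real.exp_add]; ring_nf
    have h2 : Real.exp ((a + lam) * τ) ≤ Real.exp ((a + lamhat) * τ) := by
      apply Real.exp_le_exp.2; nlinarith
    rw [h1]
    have := Real.exp_pos (-(lam * τ))
    nlinarith [hE]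
  have hfinal : (Real.exp (a * τ) - Real.exp (-(lamhat * τ))) * A +
      (Real.exp (a * τ) - Real.exp (-(lam * τ))) * B ≤
      Real.exp (-(lam * τ)) * (β / K₃) * (A + B) := by
    nlinarith [mul_le_mul_of_nonneg_right key1' hA0, mul_le_mul_of_nonneg_right key2 hB0]
  have hrw : (Real.exp (a * τ) - Real.exp (-(lamhat * τ))) * (K₁ * c' / (a + lamhat)) *
        Real.exp ((lam - lamhat) * tk) = (Real.exp (a * τ) - Real.exp (-(lamhat * τ))) * A := by
    rw [hA]; ring
  rw [hrw]
  calc (Real.exp (a * τ) - Real.exp (-(lamhat * τ))) * A +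
      (Real.exp (a * τ) - Real.exp (-(lam * τ))) * B
      ≤ Real.exp (-(lam * τ)) * (β / K₃) * (A + B) := hfinal
    _ = β * Real.exp (-(lam * τ)) := by
        rw [← hK3AB]; field_simp
end

section
/- Let a ≥ 0, c′ ≥ 0, K₁ ≥ 0, K₂ ≥ 0, λ̂ > λ > 0, β > 0, and t_k ≥ 0, define K₃ = c′·(K₁·exp((λ−λ̂)·t_k)/(a+λ̂) + K₂/(a+λ)), assume K₃ > 0, and set τ = ln(1 + β/K₃)/(a + λ̂). Let e : ℝ → ℝⁿ be differentiable on [t_k, t_k + τ] with e(t_k) = 0 and ‖e′(t)‖ ≤ a·‖e(t)‖ + c′·(K₁·exp(−λ̂·t) + K₂·exp(−λ·t)) for all t ∈ [t_k, t_k + τ]. Then ‖e(t)‖ ≤ β·exp(−λ·t) for all t ∈ [t_k, t_k + τ]; in particular, the next time at which ‖e(t)‖ can reach the threshold β·exp(−λ·t) is at least t_k + τ, so the inter-event times are lower bounded by the positive constant τ and no Zeno behavior occurs. -/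
/-!
Compare `‖e‖` with the solution `B` of the scalar equation `B' = a B + g`, `B t_k = 0`, where `g` is
the forcing term of the hypothesis: `‖e t‖ ≤ B t`. Solving explicitly,
`B t · e^{λ t} ≤ K₃ (e^{(a+λ̂)(t-t_k)} - 1)`, and by the choice of `τ` this is at most `β` exactly
for `t ≤ t_k + τ`.
-/

open Real Set

theorem norm_le_of_norm_deriv_le_linear {E : Type*} [NormedAddCommGroup E] [NormedSpace ℝ E]
    {f f' : ℝ → E} {B g : ℝ → ℝ} {a t₀ T : ℝ} (hf : ContinuousOn f (Icc t₀ T))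
    (hf' : ∀ t ∈ Ico t₀ T, HasDerivWithinAt f (f' t) (Ici t) t)
    (hB : ∀ t, HasDerivAt B (a * B t + g t) t) (h₀ : ‖f t₀‖ ≤ B t₀)
    (bound : ∀ t ∈ Ico t₀ T, ‖f' t‖ ≤ a * ‖f t‖ + g t) :
    ∀ t ∈ Icc t₀ T, ‖f t‖ ≤ B t := by
  intro t ht
  refine le_of_forall_pos_le_add fun ε hε => ?_
  -- a strict fence, `ε` above `B` at the point `t` itself
  set P : ℝ → ℝ := fun x => ε * exp ((a + 1) * (x - t)) with hPdef
  have hP : ∀ x, HasDerivAt P ((a + 1) * P x) x := fun x =>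
    ((((hasDerivAt_id' x).sub_const t).const_mul (a + 1)).exp.const_mul ε).congr_deriv
      (by simp only [hPdef]; ring)
  have hPpos : ∀ x, 0 < P x := fun x => by positivity
  have hfence := image_norm_le_of_norm_deriv_right_lt_deriv_boundary hf hf'
    (B := fun x => B x + P x) (B' := fun x => a * (B x + P x) + g x + P x)
    (by linarith [hPpos t₀] : ‖f t₀‖ ≤ B t₀ + P t₀)
    (fun x => ((hB x).add (hP x)).congr_deriv (by ring))
    (fun x hx (htouch : ‖f x‖ = B x + P x) => by
      have hx' := bound x hx
      rw [htouch] at hx'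
      linarith [hPpos x]) ht
  simpa [hPdef] using hfence

/-- The solution of `y' = a y + e^{-μ t}` with `y t₀ = 0`. -/
noncomputable def expResponse (a μ t₀ t : ℝ) : ℝ :=
  (exp (a * t - (a + μ) * t₀) - exp (-(μ * t))) / (a + μ)

theorem expResponse_self (a μ t₀ : ℝ) : expResponse a μ t₀ t₀ = 0 := by
  simp only [expResponse]
  ring_nf

theorem hasDerivAt_expResponse {a μ : ℝ} (t₀ t : ℝ) (h : a + μ ≠ 0) :
    HasDerivAt (expResponse a μ t₀) (a * expResponse a μ t₀ t + exp (-(μ * t))) t := by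
  have hgrow := (((hasDerivAt_id' t).const_mul a).sub_const ((a + μ) * t₀)).exp
  have hdecay := ((hasDerivAt_id' t).const_mul μ).neg.exp
  refine ((hgrow.sub hdecay).div_const (a + μ)).congr_deriv ?_
  simp only [expResponse, Pi.neg_apply]
  field_simp
  ring

theorem expResponse_mul_exp_le {a μ ν l t₀ t : ℝ} (hlμ : l ≤ μ) (hμν : μ ≤ ν) (haμ : 0 < a + μ)
    (ht : t₀ ≤ t) :
    expResponse a μ t₀ t * exp (l * t) ≤
      exp ((l - μ) * t₀) / (a + μ) * (exp ((a + ν) * (t - t₀)) - 1) := by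
  have hs : 0 ≤ t - t₀ := sub_nonneg.2 ht
  have hfactor : expResponse a μ t₀ t * exp (l * t) =
      exp ((l - μ) * t₀) / (a + μ) *
        (exp ((l - μ) * (t - t₀)) * (exp ((a + μ) * (t - t₀)) - 1)) := by
    have hgrow : exp (a * t - (a + μ) * t₀) * exp (l * t) =
        exp ((l - μ) * t₀) * exp ((l - μ) * (t - t₀)) * exp ((a + μ) * (t - t₀)) := by
      simp only [← exp_add]; ring_nf
    have hdecay : exp (-(μ * t)) * exp (l * t) = exp ((l - μ) * t₀) * exp ((l - μ) * (t - t₀)) := by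
      simp only [← exp_add]; ring_nf
    rw [expResponse, div_mul_eq_mul_div, sub_mul, hgrow, hdecay]
    ring
  have hgrowth : 0 ≤ exp ((a + μ) * (t - t₀)) - 1 :=
    sub_nonneg.2 (one_le_exp (by positivity))
  have hdecay : exp ((l - μ) * (t - t₀)) ≤ 1 :=
    exp_le_one_iff.2 (mul_nonpos_of_nonpos_of_nonneg (by linarith) hs)
  rw [hfactor]
  gcongr
  calc exp ((l - μ) * (t - t₀)) * (exp ((a + μ) * (t - t₀)) - 1)
      ≤ exp ((a + μ) * (t - t₀)) - 1 := mul_le_of_le_one_left hgrowth hdecay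
    _ ≤ exp ((a + ν) * (t - t₀)) - 1 := by gcongr

theorem expResponse_pair_mul_exp_le {a c K₁ K₂ μ l t₀ t : ℝ} (hc : 0 ≤ c) (hK₁ : 0 ≤ K₁)
    (hK₂ : 0 ≤ K₂) (hlμ : l < μ) (hal : 0 < a + l) (ht : t₀ ≤ t) :
    c * (K₁ * expResponse a μ t₀ t + K₂ * expResponse a l t₀ t) * exp (l * t) ≤
      c * (K₁ * exp ((l - μ) * t₀) / (a + μ) + K₂ / (a + l)) * (exp ((a + μ) * (t - t₀)) - 1) := by
  have h₁ := expResponse_mul_exp_le hlμ.le le_rfl (by linarith) ht (a := a)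
  have h₂ := expResponse_mul_exp_le le_rfl hlμ.le hal ht
  rw [sub_self, zero_mul, exp_zero] at h₂
  calc c * (K₁ * expResponse a μ t₀ t + K₂ * expResponse a l t₀ t) * exp (l * t)
      = c * (K₁ * (expResponse a μ t₀ t * exp (l * t)) +
          K₂ * (expResponse a l t₀ t * exp (l * t))) := by ring
    _ ≤ c * (K₁ * (exp ((l - μ) * t₀) / (a + μ) * (exp ((a + μ) * (t - t₀)) - 1)) +
          K₂ * (1 / (a + l) * (exp ((a + μ) * (t - t₀)) - 1))) := by gcongr
    _ = c * (K₁ * exp ((l - μ) * t₀) / (a + μ) + K₂ / (a + l)) *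
          (exp ((a + μ) * (t - t₀)) - 1) := by ring

theorem exp_mul_sub_one_le_of_le_log_div {p s x : ℝ} (hp : 0 < p) (hx : 0 < 1 + x)
    (hs : s ≤ log (1 + x) / p) : exp (p * s) - 1 ≤ x := by
  have hps : p * s ≤ log (1 + x) := (le_div_iff₀' hp).1 hs
  linarith [exp_le_exp.2 hps, exp_log hx]

theorem stmt9_general (n : ℕ) (a c' K₁ K₂ lamhat lam β tk : ℝ)
    (ha : 0 ≤ a) (hc' : 0 ≤ c') (hK₁ : 0 ≤ K₁) (hK₂ : 0 ≤ K₂)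
    (hlam : 0 < lam) (hlamlt : lam < lamhat) (hβ : 0 < β)
    (K₃ : ℝ)
    (hK₃def : K₃ = c' * (K₁ * Real.exp ((lam - lamhat) * tk) / (a + lamhat) + K₂ / (a + lam)))
    (hK₃pos : 0 < K₃)
    (τ : ℝ) (hτdef : τ = Real.log (1 + β / K₃) / (a + lamhat))
    (e e' : ℝ → EuclideanSpace ℝ (Fin n))
    (hderiv : ∀ t ∈ Set.Icc tk (tk + τ), HasDerivWithinAt e (e' t) (Set.Icc tk (tk + τ)) t)
    (h0 : e tk = 0)
    (hbnd : ∀ t ∈ Set.Icc tk (tk + τ),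
      ‖e' t‖ ≤ a * ‖e t‖ + c' * (K₁ * Real.exp (-(lamhat * t)) + K₂ * Real.exp (-(lam * t)))) :
    0 < τ ∧ ∀ t ∈ Set.Icc tk (tk + τ), ‖e t‖ ≤ β * Real.exp (-(lam * t)) := by
  have hτ : 0 < τ := hτdef ▸ div_pos (log_pos (lt_add_of_pos_right 1 (div_pos hβ hK₃pos))) (by linarith)
  refine ⟨hτ, fun t ht => ?_⟩
  set B : ℝ → ℝ := fun t => c' * (K₁ * expResponse a lamhat tk t + K₂ * expResponse a lam tk t)
  have hB : ∀ t, HasDerivAt B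
      (a * B t + c' * (K₁ * exp (-(lamhat * t)) + K₂ * exp (-(lam * t)))) t := fun t =>
    ((((hasDerivAt_expResponse tk t (by linarith)).const_mul K₁).add
      ((hasDerivAt_expResponse tk t (by linarith)).const_mul K₂)).const_mul c').congr_deriv
      (by ring)
  have hcomparison : ‖e t‖ ≤ B t :=
    norm_le_of_norm_deriv_le_linear (fun x hx => (hderiv x hx).continuousWithinAt)
      (fun x hx => (hderiv x (Ico_subset_Icc_self hx)).mono_of_mem_nhdsWithin
        (Icc_mem_nhdsGE_of_mem hx))
      hB (by simp [B, h0, expResponse_self]) (fun x hx => hbnd x (Ico_subset_Icc_self hx)) t ht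
  have hgrowth : exp ((a + lamhat) * (t - tk)) - 1 ≤ β / K₃ :=
    exp_mul_sub_one_le_of_le_log_div (by linarith) (by positivity) (hτdef ▸ by linarith [ht.2])
  have hscaled : B t * exp (lam * t) ≤ β := by
    calc B t * exp (lam * t) ≤ K₃ * (exp ((a + lamhat) * (t - tk)) - 1) :=
          hK₃def ▸ expResponse_pair_mul_exp_le hc' hK₁ hK₂ hlamlt (by linarith) ht.1
      _ ≤ K₃ * (β / K₃) := by gcongr
      _ = β := mul_div_cancel₀ β hK₃pos.ne'
  calc ‖e t‖ ≤ B t := hcomparison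
    _ = B t * exp (lam * t) * exp (-(lam * t)) := by rw [mul_assoc, ← exp_add]; simp
    _ ≤ β * exp (-(lam * t)) := by gcongr

/-- Zeno-freeness: with `K₃ = c′(K₁ e^{(λ-λ̂)t_k}/(a+λ̂) + K₂/(a+λ)) > 0` and
`τ = ln(1 + β/K₃)/(a+λ̂)`, if the event-triggering error `e` satisfies `e(t_k) = 0` and
`‖e′(t)‖ ≤ a‖e(t)‖ + c′(K₁ e^{-λ̂ t} + K₂ e^{-λ t})` on `[t_k, t_k + τ]`, then `τ > 0` and
`‖e(t)‖ ≤ β e^{-λ t}` on the whole interval `[t_k, t_k + τ]`, so the threshold `β e^{-λ t}`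
cannot be reached before `t_k + τ` and the inter-event times are lower bounded by `τ`. -/
theorem stmt9 (n : ℕ) (hn : 0 < n) (a c' K₁ K₂ lamhat lam β tk : ℝ)
    (ha : 0 ≤ a) (hc' : 0 ≤ c') (hK₁ : 0 ≤ K₁) (hK₂ : 0 ≤ K₂)
    (hlam : 0 < lam) (hlamlt : lam < lamhat) (hβ : 0 < β) (htk : 0 ≤ tk)
    (K₃ : ℝ)
    (hK₃def : K₃ = c' * (K₁ * Real.exp ((lam - lamhat) * tk) / (a + lamhat) + K₂ / (a + lam)))
    (hK₃pos : 0 < K₃)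
    (τ : ℝ) (hτdef : τ = Real.log (1 + β / K₃) / (a + lamhat))
    (e e' : ℝ → EuclideanSpace ℝ (Fin n))
    (hderiv : ∀ t ∈ Set.Icc tk (tk + τ), HasDerivWithinAt e (e' t) (Set.Icc tk (tk + τ)) t)
    (h0 : e tk = 0)
    (hbnd : ∀ t ∈ Set.Icc tk (tk + τ),
      ‖e' t‖ ≤ a * ‖e t‖ + c' * (K₁ * Real.exp (-(lamhat * t)) + K₂ * Real.exp (-(lam * t)))) :
    0 < τ ∧ ∀ t ∈ Set.Icc tk (tk + τ), ‖e t‖ ≤ β * Real.exp (-(lam * t)) :=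
  stmt9_general n a c' K₁ K₂ lamhat lam β tk ha hc' hK₁ hK₂ hlam hlamlt hβ K₃ hK₃def hK₃pos τ hτdef
    e e' hderiv h0 hbnd
end

section
/- Let a ≥ 0, c′ ≥ 0, H₁ ≥ 0, H₂ ≥ 0, λ̂ > λ > 0, β > 0, and t_k ≥ 0. Let ẽ : ℝ → ℝⁿ be differentiable on [t_k, T] with ‖ẽ(t_k)‖ ≤ β·exp(−λ·t_k) and ‖ẽ′(t)‖ ≤ a·‖ẽ(t)‖ + c′·(H₁·exp(−λ̂·t) + H₂·exp(−λ·t)) for all t ∈ [t_k, T]. Then for all t ∈ [t_k, T], writing d = t − t_k, ‖ẽ(t)‖ ≤ β·exp(a·d)·exp(−λ·t_k) + (exp(a·d) − exp(−λ̂·d))·(H₁·c′/(a+λ̂))·exp(−λ̂·t_k) + (exp(a·d) − exp(−λ·d))·(H₂·c′/(a+λ))·exp(−λ·t_k). -/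
/-!
The right-hand side `B(t)` is the solution of the scalar comparison equation
`B' = a B + c′(H₁ e^{-λ̂ t} + H₂ e^{-λ t})`, `B(t_k) = β e^{-λ t_k}`, obtained by variation of
constants: `e^{a(t - t_k)}` carries the initial value and each forcing term `e^{-μ t}` contributes
`(e^{a(t - t_k)} - e^{-μ(t - t_k)}) e^{-μ t_k} / (a + μ)`. Since `‖ẽ‖` cannot cross a barrier whose
slope exceeds the admissible growth of `‖ẽ‖` on it, `‖ẽ‖ ≤ B + η e^{(a+1)(t - t_k)}` for all
`η > 0`, and letting `η → 0` gives the claim.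
-/

open Real Set

theorem hasDerivAt_exp_mul_sub (k s x : ℝ) :
    HasDerivAt (fun t => exp (k * (t - s))) (k * exp (k * (x - s))) x := by
  simpa [mul_comm] using (((hasDerivAt_id x).sub_const s).const_mul k).exp

theorem image_norm_le_of_norm_deriv_right_le_linear_boundary
    {E : Type*} [NormedAddCommGroup E] [NormedSpace ℝ E] {f f' : ℝ → E} {a b K : ℝ}
    {g B : ℝ → ℝ} (hf : ContinuousOn f (Icc a b))
    (hf' : ∀ x ∈ Ico a b, HasDerivWithinAt f (f' x) (Ici x) x)
    (ha : ‖f a‖ ≤ B a) (hB : ∀ x, HasDerivAt B (K * B x + g x) x)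
    (bound : ∀ x ∈ Ico a b, ‖f' x‖ ≤ K * ‖f x‖ + g x) :
    ∀ ⦃x⦄, x ∈ Icc a b → ‖f x‖ ≤ B x := by
  have perturbed : ∀ η > 0, ∀ x ∈ Icc a b, ‖f x‖ ≤ B x + η * exp ((K + 1) * (x - a)) := by
    intro η hη
    refine image_norm_le_of_norm_deriv_right_lt_deriv_boundary hf hf'
      (by simpa using ha.trans (le_add_of_nonneg_right hη.le))
      (fun x => (hB x).add ((hasDerivAt_exp_mul_sub (K + 1) a x).const_mul η)) fun x hx hfx => ?_
    have hfx' := bound x hx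
    rw [hfx] at hfx'
    have : 0 < η * exp ((K + 1) * (x - a)) := by positivity
    linarith
  intro x hx
  refine le_of_forall_pos_le_add fun ε hε => ?_
  have hw : 0 < exp ((K + 1) * (x - a)) := exp_pos _
  simpa [div_mul_cancel₀ _ hw.ne'] using
    perturbed (ε / exp ((K + 1) * (x - a))) (by positivity) x hx

noncomputable def expForcedResponse (a μ s t : ℝ) : ℝ :=
  (exp (a * (t - s)) - exp (-μ * (t - s))) / (a + μ) * exp (-(μ * s))

theorem hasDerivAt_expForcedResponse {a μ : ℝ} (s : ℝ) (h : a + μ ≠ 0) (x : ℝ) :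
    HasDerivAt (expForcedResponse a μ s)
      (a * expForcedResponse a μ s x + exp (-(μ * x))) x := by
  refine ((((hasDerivAt_exp_mul_sub a s x).sub (hasDerivAt_exp_mul_sub (-μ) s x)).div_const
    (a + μ)).mul_const _).congr_deriv ?_
  have hsplit : exp (-(μ * x)) = exp (-μ * (x - s)) * exp (-(μ * s)) := by
    rw [← exp_add]; ring_nf
  rw [expForcedResponse, hsplit]
  field_simp
  ring

theorem stmt11_general (n : ℕ) (a c' H₁ H₂ lamhat lam β tk T : ℝ)
    (ha : 0 ≤ a)
    (hlam : 0 < lam) (hlamlt : lam < lamhat)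
    (e e' : ℝ → EuclideanSpace ℝ (Fin n))
    (hderiv : ∀ t ∈ Set.Icc tk T, HasDerivWithinAt e (e' t) (Set.Icc tk T) t)
    (h0 : ‖e tk‖ ≤ β * Real.exp (-(lam * tk)))
    (hbnd : ∀ t ∈ Set.Icc tk T,
      ‖e' t‖ ≤ a * ‖e t‖ + c' * (H₁ * Real.exp (-(lamhat * t)) + H₂ * Real.exp (-(lam * t)))) :
    ∀ t ∈ Set.Icc tk T,
      ‖e t‖ ≤
        β * Real.exp (a * (t - tk)) * Real.exp (-(lam * tk)) +
        (Real.exp (a * (t - tk)) - Real.exp (-(lamhat * (t - tk)))) *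
          (H₁ * c' / (a + lamhat)) * Real.exp (-(lamhat * tk)) +
        (Real.exp (a * (t - tk)) - Real.exp (-(lam * (t - tk)))) *
          (H₂ * c' / (a + lam)) * Real.exp (-(lam * tk)) := by
  have hB : ∀ x, HasDerivAt (fun t => β * exp (-(lam * tk)) * exp (a * (t - tk)) +
      H₁ * c' * expForcedResponse a lamhat tk t + H₂ * c' * expForcedResponse a lam tk t)
      (a * (β * exp (-(lam * tk)) * exp (a * (x - tk)) +
        H₁ * c' * expForcedResponse a lamhat tk x + H₂ * c' * expForcedResponse a lam tk x) +
        c' * (H₁ * exp (-(lamhat * x)) + H₂ * exp (-(lam * x)))) x := fun x =>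
    ((((hasDerivAt_exp_mul_sub a tk x).const_mul _).add
      ((hasDerivAt_expForcedResponse tk (by linarith) x).const_mul _)).add
      ((hasDerivAt_expForcedResponse tk (by linarith) x).const_mul _)).congr_deriv (by ring)
  intro t ht
  have := image_norm_le_of_norm_deriv_right_le_linear_boundary
    (fun x hx => (hderiv x hx).continuousWithinAt)
    (fun x hx => (hderiv x (Ico_subset_Icc_self hx)).mono_of_mem_nhdsWithin
      (Icc_mem_nhdsGE_of_mem hx))
    (by simpa [expForcedResponse] using h0) hB (fun x hx => hbnd x (Ico_subset_Icc_self hx)) ht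
  convert this using 1
  simp only [expForcedResponse, neg_mul]
  ring

/-- Grönwall-type bound with nonzero initial condition for the delayed-model
error: if `‖ẽ(t_k)‖ ≤ β e^{-λ t_k}` and
`‖ẽ′(t)‖ ≤ a‖ẽ(t)‖ + c′(H₁ e^{-λ̂ t} + H₂ e^{-λ t})` on `[t_k, T]`, then on `[t_k, T]`,
with `d = t - t_k`,
`‖ẽ(t)‖ ≤ β e^{a d} e^{-λ t_k} + (e^{a d} - e^{-λ̂ d})(H₁c′/(a+λ̂))e^{-λ̂ t_k}
          + (e^{a d} - e^{-λ d})(H₂c′/(a+λ))e^{-λ t_k}`. -/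
theorem stmt11 (n : ℕ) (hn : 0 < n) (a c' H₁ H₂ lamhat lam β tk T : ℝ)
    (ha : 0 ≤ a) (hc' : 0 ≤ c') (hH₁ : 0 ≤ H₁) (hH₂ : 0 ≤ H₂)
    (hlam : 0 < lam) (hlamlt : lam < lamhat) (hβ : 0 < β) (htk : 0 ≤ tk)
    (e e' : ℝ → EuclideanSpace ℝ (Fin n))
    (hderiv : ∀ t ∈ Set.Icc tk T, HasDerivWithinAt e (e' t) (Set.Icc tk T) t)
    (h0 : ‖e tk‖ ≤ β * Real.exp (-(lam * tk)))
    (hbnd : ∀ t ∈ Set.Icc tk T,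
      ‖e' t‖ ≤ a * ‖e t‖ + c' * (H₁ * Real.exp (-(lamhat * t)) + H₂ * Real.exp (-(lam * t)))) :
    ∀ t ∈ Set.Icc tk T,
      ‖e t‖ ≤
        β * Real.exp (a * (t - tk)) * Real.exp (-(lam * tk)) +
        (Real.exp (a * (t - tk)) - Real.exp (-(lamhat * (t - tk)))) *
          (H₁ * c' / (a + lamhat)) * Real.exp (-(lamhat * tk)) +
        (Real.exp (a * (t - tk)) - Real.exp (-(lam * (t - tk)))) *
          (H₂ * c' / (a + lam)) * Real.exp (-(lam * tk)) :=
  stmt11_general n a c' H₁ H₂ lamhat lam β tk T ha hlam hlamlt e e' hderiv h0 hbnd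
end

section
/- Let a ≥ 0, c′ ≥ 0, H₁ ≥ 0, H₂ ≥ 0, λ̂ > λ > 0, γ > β > 0, and t_k ≥ 0, and define H₃ = c′·(H₁·exp((λ−λ̂)·t_k)/(a+λ̂) + H₂/(a+λ)); assume H₃ ≥ 0. Then the number ε = ln((γ + H₃)/(β + H₃))/(a + λ̂) is strictly positive and satisfies the equality β·exp(a·ε) + (exp(a·ε) − exp(−λ̂·ε))·(H₁·c′/(a+λ̂))·exp((λ−λ̂)·t_k) + (exp(a·ε) − exp(−λ̂·ε))·(H₂·c′/(a+λ)) = γ·exp(−λ̂·ε). Moreover, H₃ ≤ c′·(H₁/(a+λ̂) + H₂/(a+λ)) uniformly over all t_k ≥ 0, so ε remains bounded away from zero. -/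
/- The delay bound `ε` is chosen so that `exp ((a + λ̂) ε) = (γ + H₃) / (β + H₃)`; multiplying the
claimed equality by `exp (λ̂ ε)` turns it into exactly this relation, once the two model-error terms
are collected into `(exp (a ε) - exp (-λ̂ ε)) H₃`. Positivity of `ε` is `γ > β`, and the uniform bound
on `H₃` comes from `exp ((λ - λ̂) t_k) ≤ 1`. -/

open Real

theorem log_div_add_div_pos {β γ H s : ℝ} (hβH : 0 < β + H) (hβγ : β < γ) (hs : 0 < s) :
    0 < log ((γ + H) / (β + H)) / s :=
  div_pos (log_pos ((one_lt_div hβH).2 (by linarith))) hs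

theorem exp_mul_log_div {q s : ℝ} (hq : 0 < q) (hs : s ≠ 0) : exp (s * (log q / s)) = q := by
  rw [mul_div_cancel₀ _ hs, exp_log hq]

theorem mul_exp_add_sub_mul_eq_of_exp_add_mul_eq {a l ε β γ H : ℝ} (hβH : β + H ≠ 0)
    (h : exp ((a + l) * ε) = (γ + H) / (β + H)) :
    β * exp (a * ε) + (exp (a * ε) - exp (-(l * ε))) * H = γ * exp (-(l * ε)) := by
  have hprod : exp (a * ε) * exp (l * ε) * (β + H) = γ + H := by
    rw [← exp_add, ← add_mul, h, div_mul_cancel₀ _ hβH]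
  have hinv : exp (-(l * ε)) * exp (l * ε) = 1 := by rw [← exp_add, neg_add_cancel, exp_zero]
  apply mul_right_cancel₀ (exp_pos (l * ε)).ne'
  linear_combination hprod - (γ + H) * hinv

theorem mul_add_le_of_exp_decay {c H₁ d K μ t : ℝ} (hc : 0 ≤ c) (hH₁ : 0 ≤ H₁) (hd : 0 ≤ d)
    (hμ : μ ≤ 0) (ht : 0 ≤ t) :
    c * (H₁ * exp (μ * t) / d + K) ≤ c * (H₁ / d + K) := by
  have hdecay : exp (μ * t) ≤ 1 := exp_le_one_iff.2 (mul_nonpos_of_nonpos_of_nonneg hμ ht)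
  gcongr
  exact mul_le_of_le_one_right hH₁ hdecay

theorem stmt12_general (a c' H₁ H₂ lamhat lam γ β tk : ℝ)
    (ha : 0 ≤ a) (hc' : 0 ≤ c') (hH₁ : 0 ≤ H₁)
    (hlam : 0 < lam) (hlamlt : lam < lamhat) (hβ : 0 < β) (hγβ : β < γ) (htk : 0 ≤ tk)
    (H₃ : ℝ)
    (hH₃def : H₃ = c' * (H₁ * Real.exp ((lam - lamhat) * tk) / (a + lamhat) + H₂ / (a + lam)))
    (hH₃nonneg : 0 ≤ H₃)
    (ε : ℝ) (hεdef : ε = Real.log ((γ + H₃) / (β + H₃)) / (a + lamhat)) :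
    0 < ε ∧
    (β * Real.exp (a * ε) +
      (Real.exp (a * ε) - Real.exp (-(lamhat * ε))) * (H₁ * c' / (a + lamhat)) *
        Real.exp ((lam - lamhat) * tk) +
      (Real.exp (a * ε) - Real.exp (-(lamhat * ε))) * (H₂ * c' / (a + lam)) =
        γ * Real.exp (-(lamhat * ε))) ∧
    H₃ ≤ c' * (H₁ / (a + lamhat) + H₂ / (a + lam)) := by
  have hs : 0 < a + lamhat := by linarith
  have hβH : 0 < β + H₃ := by linarith
  have hexp : exp ((a + lamhat) * ε) = (γ + H₃) / (β + H₃) := by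
    rw [hεdef]
    exact exp_mul_log_div (div_pos (by linarith) hβH) hs.ne'
  refine ⟨hεdef ▸ log_div_add_div_pos hβH hγβ hs, ?_,
    hH₃def ▸ mul_add_le_of_exp_decay hc' hH₁ hs.le (by linarith) htk⟩
  rw [← mul_exp_add_sub_mul_eq_of_exp_add_mul_eq hβH.ne' hexp, hH₃def]
  ring

/-- With `H₃ = c′(H₁ e^{(λ-λ̂)t_k}/(a+λ̂) + H₂/(a+λ)) ≥ 0` and `γ > β > 0`,
the number `ε = ln((γ+H₃)/(β+H₃))/(a+λ̂)` is strictly positive, satisfies the stated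
equality (with decay rate `λ̂` in both exponential difference factors on the left-hand side),
and `H₃` is uniformly bounded by `c′(H₁/(a+λ̂) + H₂/(a+λ))` over all `t_k ≥ 0`. -/
theorem stmt12 (a c' H₁ H₂ lamhat lam γ β tk : ℝ)
    (ha : 0 ≤ a) (hc' : 0 ≤ c') (hH₁ : 0 ≤ H₁) (hH₂ : 0 ≤ H₂)
    (hlam : 0 < lam) (hlamlt : lam < lamhat) (hβ : 0 < β) (hγβ : β < γ) (htk : 0 ≤ tk)
    (H₃ : ℝ)
    (hH₃def : H₃ = c' * (H₁ * Real.exp ((lam - lamhat) * tk) / (a + lamhat) + H₂ / (a + lam)))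
    (hH₃nonneg : 0 ≤ H₃)
    (ε : ℝ) (hεdef : ε = Real.log ((γ + H₃) / (β + H₃)) / (a + lamhat)) :
    0 < ε ∧
    (β * Real.exp (a * ε) +
      (Real.exp (a * ε) - Real.exp (-(lamhat * ε))) * (H₁ * c' / (a + lamhat)) *
        Real.exp ((lam - lamhat) * tk) +
      (Real.exp (a * ε) - Real.exp (-(lamhat * ε))) * (H₂ * c' / (a + lam)) =
        γ * Real.exp (-(lamhat * ε))) ∧
    H₃ ≤ c' * (H₁ / (a + lamhat) + H₂ / (a + lam)) :=
  stmt12_general a c' H₁ H₂ lamhat lam γ β tk ha hc' hH₁ hlam hlamlt hβ hγβ htk H₃ hH₃def hH₃nonneg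
    ε hεdef
end

section
/- Let a ≥ 0, c′ ≥ 0, H₁ ≥ 0, H₂ ≥ 0, λ̂ > λ > 0, γ > β > 0, and t_k ≥ 0, define H₃ = c′·(H₁·exp((λ−λ̂)·t_k)/(a+λ̂) + H₂/(a+λ)), and set ε = ln((γ + H₃)/(β + H₃))/(a + λ̂). Then for every d ∈ [0, ε], β·exp(a·d) + (exp(a·d) − exp(−λ̂·d))·(H₁·c′/(a+λ̂))·exp((λ−λ̂)·t_k) + (exp(a·d) − exp(−λ·d))·(H₂·c′/(a+λ)) ≤ γ·exp(−λ·d). -/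
set_option maxHeartbeats 800000


/-- With `H₃ = c′(H₁ e^{(λ-λ̂)t_k}/(a+λ̂) + H₂/(a+λ))` and
`ε = ln((γ+H₃)/(β+H₃))/(a+λ̂)`, for every delay `d ∈ [0, ε]` the delayed-error bound
`β e^{a d} + (e^{a d} - e^{-λ̂ d})(H₁ c′/(a+λ̂)) e^{(λ-λ̂)t_k}
  + (e^{a d} - e^{-λ d})(H₂ c′/(a+λ)) ≤ γ e^{-λ d}` holds. -/
theorem stmt13 (a c' H₁ H₂ lamhat lam γ β tk : ℝ)
    (ha : 0 ≤ a) (hc' : 0 ≤ c') (hH₁ : 0 ≤ H₁) (hH₂ : 0 ≤ H₂)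
    (hlam : 0 < lam) (hlamlt : lam < lamhat) (hβ : 0 < β) (hγβ : β < γ) (htk : 0 ≤ tk)
    (H₃ : ℝ)
    (hH₃def : H₃ = c' * (H₁ * Real.exp ((lam - lamhat) * tk) / (a + lamhat) + H₂ / (a + lam)))
    (ε : ℝ) (hεdef : ε = Real.log ((γ + H₃) / (β + H₃)) / (a + lamhat)) :
    ∀ d ∈ Set.Icc (0 : ℝ) ε,
      β * Real.exp (a * d) +
        (Real.exp (a * d) - Real.exp (-(lamhat * d))) * (H₁ * c' / (a + lamhat)) *
          Real.exp ((lam - lamhat) * tk) +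
        (Real.exp (a * d) - Real.exp (-(lam * d))) * (H₂ * c' / (a + lam)) ≤
          γ * Real.exp (-(lam * d)) := by
  rintro d ⟨hd0, hdε⟩
  have hp : 0 < a + lamhat := by linarith
  have hq : 0 < a + lam := by linarith
  set A := H₁ * c' / (a + lamhat) * Real.exp ((lam - lamhat) * tk) with hAdef
  set B := H₂ * c' / (a + lam) with hBdef
  have hA0 : 0 ≤ A := by positivity
  have hB0 : 0 ≤ B := by positivity
  have hH3 : H₃ = A + B := by rw [hH₃def, hAdef, hBdef]; ring
  have hH30 : 0 ≤ H₃ := by rw [hH3]; linarith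
  have hβH : 0 < β + H₃ := by linarith
  have hγH : 0 < γ + H₃ := by linarith
  set x := Real.exp ((a + lamhat) * d) with hxdef
  set y := Real.exp ((lam - lamhat) * d) with hydef
  set E := Real.exp (-(lam * d)) with hEdef
  have hE : 0 < E := Real.exp_pos _
  have hy : 0 < y := Real.exp_pos _
  have hx1 : 1 ≤ x := Real.one_le_exp (by positivity)
  have hy1 : y ≤ 1 := Real.exp_le_one_iff.2 (mul_nonpos_of_nonpos_of_nonneg (by linarith) hd0)
  have hxX : x ≤ (γ + H₃) / (β + H₃) := by
    have hXpos : 0 < (γ + H₃) / (β + H₃) := by positivity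
    have hεeq : (a + lamhat) * ε = Real.log ((γ + H₃) / (β + H₃)) := by
      rw [hεdef]; field_simp
    have hle : (a + lamhat) * d ≤ Real.log ((γ + H₃) / (β + H₃)) := by
      rw [← hεeq]; exact mul_le_mul_of_nonneg_left hdε hp.le
    calc x ≤ Real.exp (Real.log ((γ + H₃) / (β + H₃))) := Real.exp_le_exp.2 hle
      _ = (γ + H₃) / (β + H₃) := Real.exp_log hXpos
  have h1 : (β + H₃) * x ≤ γ + H₃ := by
    have := mul_le_mul_of_nonneg_left hxX hβH.le
    rwa [mul_div_cancel₀ _ hβH.ne'] at this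
  have h1' : (β + (A + B)) * x ≤ γ + (A + B) := by rw [← hH3]; exact h1
  have h3 : 0 ≤ (1 - y) * ((β + A + B) * x - (A + B)) := by
    refine mul_nonneg (by linarith) ?_
    linarith [mul_le_mul_of_nonneg_left hx1 (by linarith : (0:ℝ) ≤ β + A + B)]
  have h4 : 0 ≤ (1 - y) * B := mul_nonneg (by linarith) hB0
  have key : β * x * y + A * y * (x - 1) + B * (x * y - 1) ≤ γ := by linarith [h1', h3, h4]
  have e1 : Real.exp (a * d) = x * y * E := by
    rw [hxdef, hydef, hEdef, ← Real.exp_add, ← Real.exp_add]; congr 1; ring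
  have e2 : Real.exp (-(lamhat * d)) = y * E := by
    rw [hydef, hEdef, ← Real.exp_add]; congr 1; ring
  have e3 : (x * y * E - y * E) * (H₁ * c' / (a + lamhat)) * Real.exp ((lam - lamhat) * tk)
      = (x * y * E - y * E) * A := by rw [hAdef]; ring
  rw [e1, e2, e3]
  linarith [mul_le_mul_of_nonneg_left key hE.le]
end
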